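/- For every x < d, the function x ↦ D(x,d) is differentiable and its derivative equals -(σ_r²/2)·A(x,d)² + (ab - σ_{P₁}σ_r)·A(x,d) + (δ - μ). -/
import Mathlib


open Real

/-- `A(x,d) = (1 - e^{-a(d-x)})/a`. -/
noncomputable def Afun (a d x : ℝ) : ℝ := (1 - Real.exp (-a * (d - x))) / a

/-- `D(x,d) = -(σᵣ²/(4a))A(x,d)² + (b - σᵣσ_{P₁}/a - σᵣ²/(2a²))A(x,d)
  + (σᵣσ_{P₁}/a + σᵣ²/(2a²) - b - δ + μ)(d - x)`. -/
noncomputable def Dfun (a b σr σP1 δ μ d x : ℝ) : ℝ :=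
  -(σr ^ 2 / (4 * a)) * Afun a d x ^ 2 +
    (b - σr * σP1 / a - σr ^ 2 / (2 * a ^ 2)) * Afun a d x +
    (σr * σP1 / a + σr ^ 2 / (2 * a ^ 2) - b - δ + μ) * (d - x)

theorem stmt16 (a b σr σP1 δ μ m d : ℝ) (ha : 0 < a) (hmd : m < d) :
    ∀ x : ℝ, x < d →
      HasDerivAt (fun y => Dfun a b σr σP1 δ μ d y)
        (-(σr ^ 2 / 2) * Afun a d x ^ 2 + (a * b - σP1 * σr) * Afun a d x +
          (δ - μ)) x := by
  intro x _
  have ha' : a ≠ 0 := ha.ne'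
  have hlin : HasDerivAt (fun y : ℝ => -a * (d - y)) a x := by
    have h1 : HasDerivAt (fun y : ℝ => d - y) (-1) x :=
      (hasDerivAt_id x).const_sub d
    simpa using h1.const_mul (-a)
  have hexp : HasDerivAt (fun y : ℝ => Real.exp (-a * (d - y)))
      (Real.exp (-a * (d - x)) * a) x := hlin.exp
  have hA : HasDerivAt (fun y : ℝ => Afun a d y)
      ((0 - Real.exp (-a * (d - x)) * a) / a) x := by
    have h1 : HasDerivAt (fun y : ℝ => 1 - Real.exp (-a * (d - y)))
        (0 - Real.exp (-a * (d - x)) * a) x := (hasDerivAt_const x 1).sub hexp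
    exact h1.div_const a
  set A' := (0 - Real.exp (-a * (d - x)) * a) / a with hA'
  have hD : HasDerivAt (fun y => Dfun a b σr σP1 δ μ d y)
      (-(σr ^ 2 / (4 * a)) * (2 * Afun a d x ^ 1 * A') +
        (b - σr * σP1 / a - σr ^ 2 / (2 * a ^ 2)) * A' +
        (σr * σP1 / a + σr ^ 2 / (2 * a ^ 2) - b - δ + μ) * (0 - 1)) x := by
    unfold Dfun
    exact (((hA.pow 2).const_mul _).add (hA.const_mul _)).add
      (((hasDerivAt_const x d).sub (hasDerivAt_id x)).const_mul _)
  convert hD using 1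
  have hAval : Afun a d x = (1 - Real.exp (-a * (d - x))) / a := rfl
  rw [hA', hAval]
  field_simp
  ring
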